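/- arXiv:1007.4268 — 4 statements merged into one kernel-verified Lean document; each statement's English description precedes it below -/
import Mathlib

section
/- Let M = (Q, Γ, δ, q₀) be a rooted pushdown system and let DSG(M) = (S, Γ, E, q₀) where S is the set of control states q such that (q₀, ⟨⟩) ⊢*_M (q, σ⃗) for some stack σ⃗, and E is the set of root-reachable edges. Then DSG(M) is a Dyck state graph, and the root-reachable transition relations of M and DSG(M) coincide. -/
/-- Stack actions over a stack alphabet `Γ`: no change, push, or pop. -/
inductive SAct (Γ : Type) : Type
  | eps : SAct Γ
  | push : Γ → SAct Γ
  | pop : Γ → SAct Γ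
  deriving DecidableEq

/-- Labeled one-step transition on configurations of a pushdown system with
transition relation `δ`. -/
def PStep {Q Γ : Type} (δ : Q → SAct Γ → Q → Prop) :
    Q × List Γ → SAct Γ → Q × List Γ → Prop :=
  fun c g c' =>
    match g with
    | SAct.eps => δ c.1 SAct.eps c'.1 ∧ c'.2 = c.2
    | SAct.push γ => δ c.1 (SAct.push γ) c'.1 ∧ c'.2 = γ :: c.2
    | SAct.pop γ => δ c.1 (SAct.pop γ) c'.1 ∧ c.2 = γ :: c'.2

/-- Multi-step transition labeled by a string of stack actions. -/
inductive Steps {Q Γ : Type} (δ : Q → SAct Γ → Q → Prop) :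
    Q × List Γ → List (SAct Γ) → Q × List Γ → Prop
  | refl (c) : Steps δ c [] c
  | step {c g c' w c''} : PStep δ c g c' → Steps δ c' w c'' → Steps δ c (g :: w) c''

/-- Unlabeled configuration transition: some stack action enables the step. -/
def PAny {Q Γ : Type} (δ : Q → SAct Γ → Q → Prop) (c c' : Q × List Γ) : Prop :=
  ∃ g, PStep δ c g c'

/-- A control state is root-reachable when some configuration path with empty
initial stack reaches it from the root. -/
def Reach {Q Γ : Type} (δ : Q → SAct Γ → Q → Prop) (q₀ q : Q) : Prop :=
  ∃ σ : List Γ, Relation.ReflTransGen (PAny δ) (q₀, ([] : List Γ)) (q, σ)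

/-- The root-reachable (labeled) transition relation on control states. -/
def rootEdge {Q Γ : Type} (δ : Q → SAct Γ → Q → Prop) (q₀ : Q) :
    Q → SAct Γ → Q → Prop := fun q g q' =>
  ∃ σ σ' : List Γ,
    Relation.ReflTransGen (PAny δ) (q₀, ([] : List Γ)) (q, σ) ∧
      PStep δ (q, σ) g (q', σ')

/-!
Every edge of `DSG(M)` is an edge of `M`, and every step of a configuration path of `M` starting
at the root uses a root-reachable edge. Hence `M` and `DSG(M)` have the same
configuration paths from the root, and therefore the same reachable states and the same
root-reachable edges.
-/

section

variable {Q Γ : Type} {δ δ' : Q → SAct Γ → Q → Prop} {c c' : Q × List Γ} {g : SAct Γ}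

theorem PStep.rel (h : PStep δ c g c') : δ c.1 g c'.1 := by
  cases g <;> exact h.1

theorem PStep.of_rel (h : PStep δ c g c') (h' : δ' c.1 g c'.1) : PStep δ' c g c' := by
  cases g <;> exact ⟨h', h.2⟩

theorem rootEdge_le {q₀ q q' : Q} (h : rootEdge δ q₀ q g q') : δ q g q' := by
  obtain ⟨_, _, _, hs⟩ := h
  exact hs.rel

theorem PStep.rootEdge_of_reflTransGen {q₀ : Q}
    (hr : Relation.ReflTransGen (PAny δ) (q₀, []) c) (hs : PStep δ c g c') :
    PStep (rootEdge δ q₀) c g c' :=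
  hs.of_rel ⟨c.2, c'.2, hr, hs⟩

theorem reflTransGen_pAny_rootEdge_iff {q₀ : Q} :
    Relation.ReflTransGen (PAny (rootEdge δ q₀)) (q₀, []) c ↔
      Relation.ReflTransGen (PAny δ) (q₀, []) c := by
  constructor
  · refine Relation.ReflTransGen.mono ?_ _ _
    rintro _ _ ⟨g, hs⟩
    exact ⟨g, hs.of_rel (rootEdge_le hs.rel)⟩
  · intro h
    induction h with
    | refl => exact .refl
    | tail hr hstep ih =>
      obtain ⟨g, hs⟩ := hstep
      exact ih.tail ⟨g, hs.rootEdge_of_reflTransGen hr⟩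

theorem reach_rootEdge_iff {q₀ q : Q} : Reach (rootEdge δ q₀) q₀ q ↔ Reach δ q₀ q :=
  exists_congr fun _ => reflTransGen_pAny_rootEdge_iff

theorem rootEdge_rootEdge (q₀ : Q) : rootEdge (rootEdge δ q₀) q₀ = rootEdge δ q₀ := by
  funext q g q'
  apply propext
  constructor
  · exact rootEdge_le
  · rintro ⟨σ, σ', hr, hs⟩
    exact ⟨σ, σ', reflTransGen_pAny_rootEdge_iff.mpr hr, hs.rootEdge_of_reflTransGen hr⟩

end

/-- the Dyck state graph `DSG(M)` of a rooted pushdown system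
`M = (Q,Γ,δ,q₀)` — whose states are the root-reachable states and whose edge
(transition) relation is the root-reachable edge relation `rootEdge δ q₀` — is
itself a Dyck state graph (every root-reachable state of `M` is reachable from
the root inside `DSG(M)`), and the root-reachable transition relations of `M`
and `DSG(M)` coincide. -/
theorem dsg_of_rpds_is_dsg {Q Γ : Type} (δ : Q → SAct Γ → Q → Prop) (q₀ : Q) :
    (∀ q : Q, Reach δ q₀ q → Reach (rootEdge δ q₀) q₀ q) ∧
      rootEdge (rootEdge δ q₀) q₀ = rootEdge δ q₀ :=
  ⟨fun _ => reach_rootEdge_iff.mpr, rootEdge_rootEdge q₀⟩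
end

section
/- For a rooted pushdown system M with finite state set, the least fixed point of the iteration function mkDSG(M), starting from the empty node and edge sets, exists and is reached after finitely many iterations; moreover this least fixed point equals DSG(M), the Dyck state graph of root-reachable states and edges of M. -/
/-- One iteration of Dyck state graph construction: add the root, all states
root-reachable in one step from current states, and all root-reachable edges
out of current states. -/
def mkDSG {Q Γ : Type} (δ : Q → SAct Γ → Q → Prop) (q₀ : Q) :
    Set Q × Set (Q × SAct Γ × Q) → Set Q × Set (Q × SAct Γ × Q) := fun SE =>
  (SE.1 ∪ {q' | ∃ q ∈ SE.1, ∃ g, rootEdge δ q₀ q g q'} ∪ {q₀},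
   SE.2 ∪ {t | t.1 ∈ SE.1 ∧ rootEdge δ q₀ t.1 t.2.1 t.2.2})

section KleeneIteration

variable {α : Type*} [PartialOrder α] [OrderBot α] {f : α → α}

theorem Monotone.iterate_bot_le_of_map_le (hf : Monotone f) {x : α} (hx : f x ≤ x) (n : ℕ) :
    f^[n] ⊥ ≤ x :=
  (hf.iterate n bot_le).trans (Monotone.antitone_iterate_of_map_le hf hx n.zero_le)

theorem Monotone.exists_isFixedPt_iterate_bot [WellFoundedGT α] (hf : Monotone f) :
    ∃ n, f (f^[n] ⊥) = f^[n] ⊥ := by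
  obtain ⟨n, hn⟩ := WellFoundedGT.monotone_chain_condition
    ⟨fun n => f^[n] ⊥, Monotone.monotone_iterate_of_le_map hf bot_le⟩
  refine ⟨n, ?_⟩
  rw [← Function.iterate_succ_apply' f n ⊥]
  exact (hn (n + 1) n.le_succ).symm

end KleeneIteration

instance SAct.finite {Γ : Type} [Finite Γ] : Finite (SAct Γ) :=
  Finite.of_injective
    (fun g : SAct Γ => match g with
      | SAct.eps => (none : Option (Γ ⊕ Γ))
      | SAct.push γ => some (Sum.inl γ)
      | SAct.pop γ => some (Sum.inr γ))
    (by rintro (_ | _ | _) (_ | _ | _) h <;> simp_all)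

section DyckStateGraph

variable {Q Γ : Type} (δ : Q → SAct Γ → Q → Prop) (q₀ : Q)

def DSG : Set Q × Set (Q × SAct Γ × Q) :=
  ({q | Reach δ q₀ q}, {t | rootEdge δ q₀ t.1 t.2.1 t.2.2})

variable {δ q₀}

theorem rootEdge.reach_source {q q' : Q} {g : SAct Γ} (h : rootEdge δ q₀ q g q') :
    Reach δ q₀ q := by
  obtain ⟨σ, -, hr, -⟩ := h
  exact ⟨σ, hr⟩

theorem rootEdge.reach_target {q q' : Q} {g : SAct Γ} (h : rootEdge δ q₀ q g q') :
    Reach δ q₀ q' := by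
  obtain ⟨_, σ', hr, hs⟩ := h
  exact ⟨σ', hr.tail ⟨g, hs⟩⟩

variable (δ q₀)

theorem mkDSG_mono : Monotone (mkDSG δ q₀) := by
  rintro ⟨S, E⟩ ⟨S', E'⟩ ⟨hS, hE⟩
  refine ⟨?_, ?_⟩
  · rintro x ((hx | ⟨q, hq, g, hg⟩) | hx)
    · exact Or.inl (Or.inl (hS hx))
    · exact Or.inl (Or.inr ⟨q, hS hq, g, hg⟩)
    · exact Or.inr hx
  · rintro t (ht | ⟨ht₁, ht₂⟩)
    · exact Or.inl (hE ht)
    · exact Or.inr ⟨hS ht₁, ht₂⟩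

theorem mkDSG_DSG_le : mkDSG δ q₀ (DSG δ q₀) ≤ DSG δ q₀ := by
  refine ⟨?_, ?_⟩
  · rintro x ((hx | ⟨_, -, _, hg⟩) | rfl)
    · exact hx
    · exact hg.reach_target
    · exact ⟨[], .refl⟩
  · rintro t (ht | ⟨-, ht⟩) <;> exact ht

variable {δ q₀}

theorem DSG_le_of_mkDSG_le {X : Set Q × Set (Q × SAct Γ × Q)} (hX : mkDSG δ q₀ X ≤ X) :
    DSG δ q₀ ≤ X := by
  have reach_mem : ∀ q, Reach δ q₀ q → q ∈ X.1 := by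
    rintro q ⟨σ, hσ⟩
    suffices ∀ c, Relation.ReflTransGen (PAny δ) (q₀, []) c → c.1 ∈ X.1 from this _ hσ
    intro c hc
    induction hc with
    | refl => exact hX.1 (Or.inr rfl)
    | tail hreach hstep ih =>
      obtain ⟨g, hs⟩ := hstep
      exact hX.1 (Or.inl (Or.inr ⟨_, ih, g, _, _, hreach, hs⟩))
  refine ⟨reach_mem, ?_⟩
  intro t ht
  exact hX.2 (Or.inr ⟨reach_mem _ ht.reach_source, ht⟩)

end DyckStateGraph

/-- for a rooted pushdown system with finite state set (and finite
stack alphabet), iterating `mkDSG(M)` from the empty node and edge sets reaches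
a fixed point after finitely many iterations; this fixed point is the least
fixed point of `mkDSG(M)` and equals `DSG(M)`, the pair of the set of
root-reachable states and the set of root-reachable edges of `M`. -/
theorem mkDSG_lfp_eq_DSG {Q Γ : Type} [Fintype Q] [Fintype Γ]
    (δ : Q → SAct Γ → Q → Prop) (q₀ : Q) :
    ∃ n : ℕ,
      (mkDSG δ q₀)^[n] (∅, ∅) = mkDSG δ q₀ ((mkDSG δ q₀)^[n] (∅, ∅)) ∧
      (∀ X, mkDSG δ q₀ X = X → (mkDSG δ q₀)^[n] (∅, ∅) ≤ X) ∧
      (mkDSG δ q₀)^[n] (∅, ∅) =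
        ({q | Reach δ q₀ q}, {t | rootEdge δ q₀ t.1 t.2.1 t.2.2}) := by
  have hmono := mkDSG_mono δ q₀
  obtain ⟨n, hfix⟩ := hmono.exists_isFixedPt_iterate_bot
  have hleast : ∀ X, mkDSG δ q₀ X ≤ X → (mkDSG δ q₀)^[n] ⊥ ≤ X :=
    fun X hX => hmono.iterate_bot_le_of_map_le hX n
  exact ⟨n, hfix.symm, fun X hX => hleast X hX.le,
    le_antisymm (hleast _ (mkDSG_DSG_le δ q₀)) (DSG_le_of_mkDSG_le hfix.le)⟩
end

section
/- In a pushdown system, composing a no-net-stack-change path from q₀ to q, a push of γ from q to q', a no-net-stack-change path from q' to q'', and a pop of γ from q'' to q₁ yields a no-net-stack-change path from q₀ to q₁. That is, ε-closure edges are closed under the push–ε–pop composition rule. -/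
/-- Balanced (Dyck) strings of stack actions. -/
inductive DyckBalanced {Γ : Type} : List (SAct Γ) → Prop
  | nil : DyckBalanced []
  | eps {w} : DyckBalanced w → DyckBalanced (SAct.eps :: w)
  | wrap {γ w₁ w₂} : DyckBalanced w₁ → DyckBalanced w₂ →
      DyckBalanced (SAct.push γ :: w₁ ++ SAct.pop γ :: w₂)

/-- ε-reachability between control states: for every stack there is a
balanced-action path leaving the stack unchanged. -/
def EpsPath {Q Γ : Type} (δ : Q → SAct Γ → Q → Prop) (q q' : Q) : Prop :=
  ∀ σ : List Γ, ∃ w : List (SAct Γ),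
    DyckBalanced w ∧ Steps δ (q, σ) w (q', σ)

theorem Steps.append {Q Γ : Type} {δ : Q → SAct Γ → Q → Prop}
    {c c' c'' : Q × List Γ} {w w' : List (SAct Γ)}
    (h : Steps δ c w c') (h' : Steps δ c' w' c'') : Steps δ c (w ++ w') c'' := by
  induction h with
  | refl => exact h'
  | step s _ ih => exact Steps.step s (ih h')

theorem DyckBalanced.append {Γ : Type} {w w' : List (SAct Γ)}
    (h : DyckBalanced w) (h' : DyckBalanced w') : DyckBalanced (w ++ w') := by
  induction h with
  | nil => exact h'
  | eps _ ih => exact DyckBalanced.eps ih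
  | wrap h₁ _ _ ih₂ =>
    simp only [List.cons_append, List.append_assoc]
    exact DyckBalanced.wrap h₁ ih₂

theorem DyckBalanced.push_pop {Γ : Type} {w : List (SAct Γ)} (γ : Γ)
    (h : DyckBalanced w) : DyckBalanced (SAct.push γ :: w ++ [SAct.pop γ]) :=
  h.wrap DyckBalanced.nil

theorem EpsPath.trans {Q Γ : Type} {δ : Q → SAct Γ → Q → Prop} {q₀ q q₁ : Q}
    (h₀ : EpsPath δ q₀ q) (h₁ : EpsPath δ q q₁) : EpsPath δ q₀ q₁ := by
  intro σ
  obtain ⟨w₀, hb₀, hs₀⟩ := h₀ σ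
  obtain ⟨w₁, hb₁, hs₁⟩ := h₁ σ
  exact ⟨w₀ ++ w₁, hb₀.append hb₁, hs₀.append hs₁⟩

theorem EpsPath.of_push_pop {Q Γ : Type} {δ : Q → SAct Γ → Q → Prop} {q q' q'' q₁ : Q}
    {γ : Γ} (hpush : δ q (SAct.push γ) q') (h : EpsPath δ q' q'')
    (hpop : δ q'' (SAct.pop γ) q₁) : EpsPath δ q q₁ := by
  intro σ
  obtain ⟨w, hb, hs⟩ := h (γ :: σ)
  have hpop_step : Steps δ (q'', γ :: σ) [SAct.pop γ] (q₁, σ) :=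
    Steps.step (c' := (q₁, σ)) ⟨hpop, rfl⟩ (Steps.refl _)
  exact ⟨_, hb.push_pop γ, Steps.step (c' := (q', γ :: σ)) ⟨hpush, rfl⟩ (hs.append hpop_step)⟩

/-- ε-reachability is closed under the push–ε–pop composition rule:
an ε-path to `q`, a push of `γ` to `q'`, an ε-path to `q''`, and a pop of `γ`
to `q₁` compose to an ε-path from `q₀` to `q₁`. -/
theorem epsPath_push_eps_pop {Q Γ : Type} (δ : Q → SAct Γ → Q → Prop)
    (q₀ q q' q'' q₁ : Q) (γ : Γ)
    (h₀ : EpsPath δ q₀ q)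
    (hpush : δ q (SAct.push γ) q')
    (h₁ : EpsPath δ q' q'')
    (hpop : δ q'' (SAct.pop γ) q₁) :
    EpsPath δ q₀ q₁ :=
  h₀.trans (.of_push_pop hpush h₁ hpop)
end

section
/- The least ε-closure relation H on control states generated by the rules (i) (q, ε, q') ∈ δ implies (q, q') ∈ H, (ii) H is reflexive and transitive, and (iii) if (q, γ₊, q') ∈ δ, (q', q'') ∈ H, and (q'', γ₋, q''') ∈ δ then (q, q''') ∈ H, coincides exactly with the balanced-path ε-reachability relation ⇝ε of the pushdown system. -/
/-- The least ε-closure relation generated by the rules: ε-edges, reflexivity,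
transitivity, and matched push–ε-closure–pop composition. -/
inductive EpsClo {Q Γ : Type} (δ : Q → SAct Γ → Q → Prop) : Q → Q → Prop
  | base {q q'} : δ q SAct.eps q' → EpsClo δ q q'
  | refl (q) : EpsClo δ q q
  | trans {q q' q''} : EpsClo δ q q' → EpsClo δ q' q'' → EpsClo δ q q''
  | pushpop {q q' q'' q''' γ} : δ q (SAct.push γ) q' → EpsClo δ q' q'' →
      δ q'' (SAct.pop γ) q''' → EpsClo δ q q'''

/-! A derivation of `EpsClo` unfolds into a balanced run by induction on the rules: the `pushpop`
rule runs the inner path on the stack `γ :: σ` between the push and the pop. Conversely, induction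
on the Dyck derivation of the action string turns each `wrap` block into a `pushpop` step; the
stack contents never matter, since the Dyck word already pairs every push with a pop of the same
letter. -/

namespace Steps

variable {Q Γ : Type} {δ : Q → SAct Γ → Q → Prop}

lemma single {c c' : Q × List Γ} {g : SAct Γ} (h : PStep δ c g c') : Steps δ c [g] c' :=
  step h (refl c')

lemma append_s10 {c c' c'' : Q × List Γ} {w₁ w₂ : List (SAct Γ)}
    (h₁ : Steps δ c w₁ c') (h₂ : Steps δ c' w₂ c'') : Steps δ c (w₁ ++ w₂) c'' := by
  induction h₁ with
  | refl => exact h₂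
  | step hs _ ih => exact step hs (ih h₂)

lemma exists_of_append {c c'' : Q × List Γ} {w₁ w₂ : List (SAct Γ)}
    (h : Steps δ c (w₁ ++ w₂) c'') : ∃ c', Steps δ c w₁ c' ∧ Steps δ c' w₂ c'' := by
  induction w₁ generalizing c with
  | nil => exact ⟨c, refl c, h⟩
  | cons g w ih =>
    cases h with
    | step hs hrest =>
      obtain ⟨c', h₁, h₂⟩ := ih hrest
      exact ⟨c', step hs h₁, h₂⟩

end Steps

namespace DyckBalanced

variable {Q Γ : Type} {δ : Q → SAct Γ → Q → Prop}

lemma append_s10 {w₁ w₂ : List (SAct Γ)} (h₁ : DyckBalanced w₁) (h₂ : DyckBalanced w₂) :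
    DyckBalanced (w₁ ++ w₂) := by
  induction h₁ with
  | nil => exact h₂
  | eps _ ih => exact eps ih
  | wrap ha _ _ ihb =>
    simp only [List.cons_append, List.append_assoc]
    exact wrap ha ihb

lemma epsClo_of_steps {w : List (SAct Γ)} (hw : DyckBalanced w) :
    ∀ {c c' : Q × List Γ}, Steps δ c w c' → EpsClo δ c.1 c'.1 := by
  induction hw with
  | nil => rintro c _ ⟨⟩; exact EpsClo.refl c.1
  | eps _ ih =>
    rintro c c' (_ | ⟨⟨hd, -⟩, hrest⟩)
    exact (EpsClo.base hd).trans (ih hrest)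
  | wrap _ _ ih₁ ih₂ =>
    rintro c c' (_ | ⟨⟨hpush, -⟩, hrest⟩)
    obtain ⟨c₂, h₁, _ | ⟨⟨hpop, -⟩, h₂⟩⟩ := Steps.exists_of_append hrest
    exact (EpsClo.pushpop hpush (ih₁ h₁) hpop).trans (ih₂ h₂)

end DyckBalanced

lemma EpsClo.epsPath {Q Γ : Type} {δ : Q → SAct Γ → Q → Prop} {q q' : Q}
    (h : EpsClo δ q q') : EpsPath δ q q' := by
  induction h with
  | base hd => exact fun σ => ⟨[.eps], .eps .nil, .single (g := .eps) ⟨hd, rfl⟩⟩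
  | refl => exact fun σ => ⟨[], .nil, .refl _⟩
  | trans _ _ ih₁ ih₂ =>
    intro σ
    obtain ⟨w₁, hb₁, hs₁⟩ := ih₁ σ
    obtain ⟨w₂, hb₂, hs₂⟩ := ih₂ σ
    exact ⟨w₁ ++ w₂, hb₁.append_s10 hb₂, hs₁.append_s10 hs₂⟩
  | @pushpop _ _ _ _ γ hpush _ hpop ih =>
    intro σ
    obtain ⟨w, hb, hs⟩ := ih (γ :: σ)
    exact ⟨.push γ :: w ++ [.pop γ], .wrap hb .nil,
      .step (g := .push γ) ⟨hpush, rfl⟩ (hs.append_s10 (.single (g := .pop γ) ⟨hpop, rfl⟩))⟩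

/-- the least ε-closure relation generated by the rules coincides
exactly with balanced-path ε-reachability. -/
theorem epsClo_iff_epsPath {Q Γ : Type} (δ : Q → SAct Γ → Q → Prop) (q q' : Q) :
    EpsClo δ q q' ↔ EpsPath δ q q' := by
  refine ⟨EpsClo.epsPath, fun h => ?_⟩
  obtain ⟨w, hw, hs⟩ := h []
  exact hw.epsClo_of_steps hs
end
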